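/- Let T and T' be triangles in ℝ² (convex hulls of affinely independent triples of points) such that T is not an image of T' under a map of the form z ↦ s·z + t with s ∈ {1, −1} and t ∈ ℝ² (i.e., T ≄ T'). For δ ∈ ℝ let M_δ : ℝ² → ℝ² be the shear M_δ(x, y) = (x + δy, y). Then the set { δ ∈ ℝ : M_δ(T) is congruent to M_δ(T') } is finite. -/

import Mathlib

open MeasureTheory

noncomputable section

/-- The Euclidean plane. -/
abbrev Plane : Type := EuclideanSpace ℝ (Fin 2)

/-- A triangle is the convex hull of three affinely independent points. -/
def IsTriangle (T : Set Plane) : Prop :=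
  ∃ p q r : Plane, AffineIndependent ℝ ![p, q, r] ∧ T = convexHull ℝ {p, q, r}

/-- Two subsets of the plane are congruent if one is the image of the other under
an isometry of the plane (reflections allowed). -/
def PlaneCongruent (A B : Set Plane) : Prop :=
  ∃ f : Plane ≃ᵢ Plane, f '' A = B

/-- A tiling of `A ⊆ ℝ²`: a countable collection of compact sets whose interiors are
pairwise disjoint and whose union is `A`. -/
def IsTilingOf (𝒯 : Set (Set Plane)) (A : Set Plane) : Prop :=
  𝒯.Countable ∧ (∀ T ∈ 𝒯, IsCompact T) ∧
    (∀ T ∈ 𝒯, ∀ T' ∈ 𝒯, T ≠ T' → interior T ∩ interior T' = ∅) ∧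
    ⋃₀ 𝒯 = A

/-- A vertex of a (convex polygonal) tile is an extreme point of it. -/
def IsVertexOf (p : Plane) (T : Set Plane) : Prop := p ∈ Set.extremePoints ℝ T

/-- An edge of a convex polygon: a nondegenerate segment between two vertices that
lies in the frontier of the polygon. -/
def IsEdgeOf (e : Set Plane) (T : Set Plane) : Prop :=
  ∃ u v : Plane, u ≠ v ∧ IsVertexOf u T ∧ IsVertexOf v T ∧
    e = segment ℝ u v ∧ e ⊆ frontier T

/-- A tiling by convex polygons is vertex-to-vertex if the intersection of any two
distinct tiles is empty, a common vertex, or a common entire edge. -/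
def IsVertexToVertex (𝒯 : Set (Set Plane)) : Prop :=
  ∀ T ∈ 𝒯, ∀ T' ∈ 𝒯, T ≠ T' →
    T ∩ T' = ∅ ∨
    (∃ p : Plane, T ∩ T' = {p} ∧ IsVertexOf p T ∧ IsVertexOf p T') ∨
    (IsEdgeOf (T ∩ T') T ∧ IsEdgeOf (T ∩ T') T')

/-- A convex polygon with exactly `n` vertices: a compact convex set whose set of
extreme points is finite with exactly `n` elements. -/
def IsConvexPolygon (n : ℕ) (T : Set Plane) : Prop :=
  IsCompact T ∧ Convex ℝ T ∧ (Set.extremePoints ℝ T).Finite ∧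
    (Set.extremePoints ℝ T).ncard = n

/-- `A ≃ B`: `B` is the image of `A` under `z ↦ s·z + t` with `s ∈ {1, -1}`. -/
def TransCong (A B : Set Plane) : Prop :=
  ∃ s : ℝ, (s = 1 ∨ s = -1) ∧ ∃ t : Plane, B = (fun z => s • z + t) '' A

/-- The shear map `M_δ (x, y) = (x + δy, y)`. -/
def shear (δ : ℝ) (p : Plane) : Plane :=
  (WithLp.equiv 2 (Fin 2 → ℝ)).symm ![p 0 + δ * p 1, p 1]

/-
An isometry maps the extreme points of `M_δ T`, i.e. its vertices, onto those of `M_δ T'`. Hence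
for some matching `σ` of the vertices, every edge vector `u` of `T` and the matched edge vector `w`
of `T'` satisfy `‖M_δ w‖ = ‖M_δ u‖`. Squared, both sides are quadratic polynomials in `δ`; if they
agree for infinitely many `δ` they coincide, which forces `w = ±u`. Affine independence of the
vertices makes the signs of the three edges agree, so `T'` is a translate of `±T`. As there are
only six matchings, only finitely many `δ` can work.
-/

open Set

section Convex

variable {𝕜 E : Type*} [Field 𝕜] [LinearOrder 𝕜] [IsStrictOrderedRing 𝕜] [AddCommGroup E]
  [Module 𝕜 E]

theorem mem_extremePoints_convexHull_of_notMem_convexHull_sdiff {s : Set E} {x : E}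
    (hx : x ∈ s) (hxs : x ∉ convexHull 𝕜 (s \ {x})) : x ∈ (convexHull 𝕜 s).extremePoints 𝕜 := by
  rcases (s \ {x}).eq_empty_or_nonempty with hempty | hne
  · rw [show s = {x} from (sdiff_eq_empty.1 hempty).antisymm (singleton_subset_iff.2 hx),
      convexHull_singleton, extremePoints_singleton]
    exact mem_singleton x
  rw [← insert_eq_of_mem hx, ← insert_sdiff_singleton, convexHull_insert hne,
    mem_extremePoints_iff_forall_segment]
  refine ⟨subset_convexJoin_left hne.convexHull (mem_singleton x), ?_⟩
  simp only [mem_convexJoin, mem_singleton_iff, exists_eq_left]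
  -- With `y ∈ [x, y']`, `z ∈ [x, z']` and `y', z' ∈ convexHull (s \ {x})`, unless `y` or `z` is `x`
  -- the relation `x ∈ [y, z]` writes `x` as a convex combination of `y'` and `z'`.
  rintro y ⟨y', hy', c, d, hc, hd, hcd, rfl⟩ z ⟨z', hz', e, f, he, hf, hef, rfl⟩
    ⟨a, b, ha, hb, hab, hxyz⟩
  have hcomb : (a * d + b * f) • x = (a * d) • y' + (b * f) • z' := by
    have : a * d + b * f = 1 - (a * c + b * e) := by linear_combination a * hcd + b * hef + hab
    rw [this, sub_smul, one_smul]
    nth_rw 1 [← hxyz]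
    module
  rcases (add_nonneg (mul_nonneg ha hd) (mul_nonneg hb hf)).eq_or_lt with hk | hk
  · have had : a * d = 0 := by linarith [mul_nonneg ha hd, mul_nonneg hb hf]
    rcases mul_eq_zero.1 had with rfl | rfl
    · right
      simpa [show b = 1 by linarith] using hxyz
    · left
      rw [show c = 1 by linarith]
      module
  · refine absurd ?_ hxs
    convert (convex_convexHull 𝕜 (s \ {x})) hy' hz' (div_nonneg (mul_nonneg ha hd) hk.le)
      (div_nonneg (mul_nonneg hb hf) hk.le) (by field_simp) using 1
    rw [div_eq_inv_mul, div_eq_inv_mul, mul_smul, mul_smul (a * d + b * f)⁻¹, ← smul_add, ← hcomb,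
      smul_smul, inv_mul_cancel₀ hk.ne', one_smul]

theorem AffineIndependent.extremePoints_convexHull_range {ι : Type*} {p : ι → E}
    (hp : AffineIndependent 𝕜 p) : (convexHull 𝕜 (range p)).extremePoints 𝕜 = range p := by
  refine extremePoints_convexHull_subset.antisymm ?_
  rintro _ ⟨i, rfl⟩
  refine mem_extremePoints_convexHull_of_notMem_convexHull_sdiff (mem_range_self i) fun hi => ?_
  refine hp.notMem_affineSpan_sdiff i univ (convexHull_subset_affineSpan _ (convexHull_mono ?_ hi))
  rintro _ ⟨⟨j, rfl⟩, hj⟩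
  exact ⟨j, ⟨mem_univ j, fun hji => hj (by rw [mem_singleton_iff.1 hji]; rfl)⟩, rfl⟩

theorem AffineIndependent.range_eq_of_convexHull_range_eq {ι : Type*} {p q : ι → E}
    (hp : AffineIndependent 𝕜 p) (hq : AffineIndependent 𝕜 q)
    (h : convexHull 𝕜 (range p) = convexHull 𝕜 (range q)) : range p = range q := by
  rw [← hp.extremePoints_convexHull_range, h, hq.extremePoints_convexHull_range]

end Convex

theorem Function.Injective.exists_perm_eq_comp_of_range_eq {ι α : Type*} {f g : ι → α}
    (hf : f.Injective) (hg : g.Injective) (h : range f = range g) :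
    ∃ σ : Equiv.Perm ι, f = g ∘ σ :=
  ⟨(Equiv.ofInjective f hf).trans ((Equiv.setCongr h).trans (Equiv.ofInjective g hg).symm),
    funext fun i => (Equiv.apply_ofInjective_symm hg ⟨f i, h ▸ mem_range_self i⟩).symm⟩

theorem IsometryEquiv.exists_perm_dist_eq_of_image_convexHull {ι E F : Type*}
    [NormedAddCommGroup E] [NormedSpace ℝ E] [NormedAddCommGroup F] [NormedSpace ℝ F]
    {u : ι → E} {u' : ι → F} (hu : AffineIndependent ℝ u) (hu' : AffineIndependent ℝ u')
    (f : E ≃ᵢ F) (h : f '' convexHull ℝ (range u) = convexHull ℝ (range u')) :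
    ∃ σ : Equiv.Perm ι, ∀ i j, dist (u' (σ i)) (u' (σ j)) = dist (u i) (u j) := by
  let F := f.toRealAffineIsometryEquiv.toAffineEquiv.toAffineMap
  have hrange : range (f ∘ u) = range u' :=
    (hu.map' F f.injective).range_eq_of_convexHull_range_eq hu'
      (by rw [range_comp, ← h]; exact (F.image_convexHull _).symm)
  obtain ⟨σ, hσ⟩ :=
    (f.injective.comp hu.injective).exists_perm_eq_comp_of_range_eq hu'.injective hrange
  refine ⟨σ, fun i j => ?_⟩
  have hσ' (k : ι) : u' (σ k) = f (u k) := (congrFun hσ k).symm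
  rw [hσ', hσ', f.dist_eq]

theorem AffineIndependent.exists_eq_smul_add_of_sub_eq_or_eq_neg {k ι V : Type*} [CommRing k]
    [AddCommGroup V] [Module k V] {v w : ι → V} (hv : AffineIndependent k v)
    (h : ∀ i j, w i - w j = v i - v j ∨ w i - w j = -(v i - v j)) :
    ∃ s : k, (s = 1 ∨ s = -1) ∧ ∃ t : V, ∀ i, w i = s • v i + t := by
  rcases isEmpty_or_nonempty ι with hι | ⟨⟨i₀⟩⟩
  · exact ⟨1, Or.inl rfl, 0, isEmptyElim⟩
  have hsign (i j : ι) : ∃ e : k, (e = 1 ∨ e = -1) ∧ w i - w j = e • (v i - v j) := by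
    rcases h i j with hij | hij
    · exact ⟨1, Or.inl rfl, by rw [hij, one_smul]⟩
    · exact ⟨-1, Or.inr rfl, by rw [hij, neg_one_smul]⟩
  choose e he hwe using fun i => hsign i i₀
  have hli := (affineIndependent_iff_linearIndependent_vsub k v i₀).1 hv
  have he_eq (i j : ι) (hi : i ≠ i₀) (hj : j ≠ i₀) : e i = e j := by
    obtain rfl | hij := eq_or_ne i j
    · rfl
    obtain ⟨f, -, hf⟩ := hsign i j
    have hne : (⟨i, hi⟩ : {x // x ≠ i₀}) ≠ ⟨j, hj⟩ := fun h => hij (congrArg Subtype.val h)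
    obtain ⟨hfi, hfj⟩ := (LinearIndepOn.pair_iff _ hne).1 (hli.linearIndepOn _) (e i - f) (f - e j)
      (by simp only [vsub_eq_sub]; linear_combination (norm := module) hf - hwe i + hwe j)
    exact (sub_eq_zero.1 hfi).trans (sub_eq_zero.1 hfj)
  by_cases hsingle : ∃ j, j ≠ i₀
  · obtain ⟨j, hj⟩ := hsingle
    refine ⟨e j, he j, w i₀ - e j • v i₀, fun i => ?_⟩
    obtain rfl | hi := eq_or_ne i i₀
    · abel
    · rw [← he_eq i j hi hj]
      linear_combination (norm := module) hwe i
  · push Not at hsingle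
    exact ⟨1, Or.inl rfl, w i₀ - v i₀, fun i => by rw [hsingle i]; module⟩

open Polynomial in
theorem eq_zero_of_infinite_setOf_quadratic_eq_zero {R : Type*} [CommRing R] [IsDomain R]
    {a b c : R} (h : {x : R | a * x ^ 2 + b * x + c = 0}.Infinite) : a = 0 ∧ b = 0 ∧ c = 0 := by
  have hP : C a * X ^ 2 + C b * X + C c = 0 :=
    eq_zero_of_infinite_isRoot _ (by simpa using h)
  refine ⟨?_, ?_, ?_⟩
  · simpa using congrArg (coeff · 2) hP
  · simpa using congrArg (coeff · 1) hP
  · simpa using congrArg (coeff · 0) hP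

@[simp] theorem shear_apply_zero (δ : ℝ) (p : Plane) : shear δ p 0 = p 0 + δ * p 1 := rfl

@[simp] theorem shear_apply_one (δ : ℝ) (p : Plane) : shear δ p 1 = p 1 := rfl

def shearEquiv (δ : ℝ) : Plane ≃ₗ[ℝ] Plane where
  toFun := shear δ
  invFun := shear (-δ)
  map_add' x y := by ext i; fin_cases i <;> simp [mul_add, add_add_add_comm]
  map_smul' c x := by ext i; fin_cases i <;> simp [mul_add, mul_left_comm]
  left_inv x := by ext i; fin_cases i <;> simp
  right_inv x := by ext i; fin_cases i <;> simp

@[simp] theorem coe_shearEquiv (δ : ℝ) : ⇑(shearEquiv δ) = shear δ := rfl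

theorem dist_shear (δ : ℝ) (x y : Plane) : dist (shear δ x) (shear δ y) = ‖shear δ (x - y)‖ := by
  rw [dist_eq_norm, ← coe_shearEquiv, map_sub]

theorem norm_shear_sq (δ : ℝ) (u : Plane) :
    ‖shear δ u‖ ^ 2 = u 1 ^ 2 * δ ^ 2 + 2 * (u 0 * u 1) * δ + ‖u‖ ^ 2 := by
  simp only [EuclideanSpace.real_norm_sq_eq, Fin.sum_univ_two, shear_apply_zero, shear_apply_one]
  ring

theorem eq_or_eq_neg_of_infinite_norm_shear_eq {u w : Plane}
    (h : {δ | ‖shear δ w‖ = ‖shear δ u‖}.Infinite) : w = u ∨ w = -u := by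
  have hquad : {δ : ℝ | (w 1 ^ 2 - u 1 ^ 2) * δ ^ 2 + 2 * (w 0 * w 1 - u 0 * u 1) * δ
      + (‖w‖ ^ 2 - ‖u‖ ^ 2) = 0}.Infinite := h.mono fun δ hδ => by
    have := congrArg (· ^ 2) hδ
    simp only [norm_shear_sq] at this
    simp only [mem_ofPred_eq]
    linear_combination this
  obtain ⟨h2, h1, h0⟩ := eq_zero_of_infinite_setOf_quadratic_eq_zero hquad
  have hprod : ‖w - u‖ ^ 2 * ‖w + u‖ ^ 2 = 0 := by
    simp only [EuclideanSpace.real_norm_sq_eq, Fin.sum_univ_two, PiLp.sub_apply,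
      PiLp.add_apply] at h0 ⊢
    -- `‖w - u‖²‖w + u‖² = (‖w‖² - ‖u‖²)² + 4 (‖w‖²‖u‖² - ⟪w, u⟫²)`, and by Lagrange's identity
    -- `‖w‖²‖u‖² - ⟪w, u⟫² = (w₀u₁ - w₁u₀)²`, which the coefficient identities make vanish.
    linear_combination (w 0 ^ 2 + w 1 ^ 2 - u 0 ^ 2 - u 1 ^ 2 + 4 * u 1 ^ 2) * h0
      + 4 * (u 0 ^ 2 - u 1 ^ 2) * h2 - 4 * (u 0 * u 1) * h1
  rcases mul_eq_zero.1 hprod with hsub | hadd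
  · exact Or.inl (by simpa [sub_eq_zero] using hsub)
  · exact Or.inr (eq_neg_of_add_eq_zero_left (by simpa using hadd))

theorem IsTriangle.exists_affineIndependent_eq_convexHull {T : Set Plane} (hT : IsTriangle T) :
    ∃ v : Fin 3 → Plane, AffineIndependent ℝ v ∧ T = convexHull ℝ (range v) := by
  obtain ⟨p, q, r, h, rfl⟩ := hT
  exact ⟨![p, q, r], h, by rw [Matrix.range_cons, Matrix.range_cons_cons_empty, singleton_union]⟩

theorem PlaneCongruent.exists_perm_norm_shear_eq {ι : Type*} {v v' : ι → Plane} {δ : ℝ}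
    (hv : AffineIndependent ℝ v) (hv' : AffineIndependent ℝ v')
    (h : PlaneCongruent (shear δ '' convexHull ℝ (range v)) (shear δ '' convexHull ℝ (range v'))) :
    ∃ σ : Equiv.Perm ι, ∀ i j, ‖shear δ (v' (σ i) - v' (σ j))‖ = ‖shear δ (v i - v j)‖ := by
  obtain ⟨f, hf⟩ := h
  have himage (u : ι → Plane) :
      shear δ '' convexHull ℝ (range u) = convexHull ℝ (range (shear δ ∘ u)) := by
    rw [range_comp]
    exact (shearEquiv δ).toLinearMap.image_convexHull _
  have hindep {u : ι → Plane} (hu : AffineIndependent ℝ u) : AffineIndependent ℝ (shear δ ∘ u) :=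
    hu.map' (shearEquiv δ).toLinearMap.toAffineMap (shearEquiv δ).injective
  rw [himage, himage] at hf
  obtain ⟨σ, hσ⟩ := f.exists_perm_dist_eq_of_image_convexHull (hindep hv) (hindep hv') hf
  exact ⟨σ, fun i j => by simpa only [Function.comp_apply, dist_shear] using hσ i j⟩

theorem transCong_convexHull_range_of_infinite {ι : Type*} {v v' : ι → Plane}
    (hv : AffineIndependent ℝ v) (σ : Equiv.Perm ι)
    (h : {δ | ∀ i j, ‖shear δ (v' (σ i) - v' (σ j))‖ = ‖shear δ (v i - v j)‖}.Infinite) :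
    TransCong (convexHull ℝ (range v)) (convexHull ℝ (range v')) := by
  have hpm (i j : ι) :
      v' (σ i) - v' (σ j) = v i - v j ∨ v' (σ i) - v' (σ j) = -(v i - v j) :=
    eq_or_eq_neg_of_infinite_norm_shear_eq (h.mono fun _ hδ => by exact hδ i j)
  obtain ⟨s, hs, t, hst⟩ := hv.exists_eq_smul_add_of_sub_eq_or_eq_neg (w := v' ∘ σ) hpm
  refine ⟨s, hs, t, ?_⟩
  rw [← σ.surjective.range_comp, show v' ∘ σ = (fun z => s • z + t) ∘ v from funext hst,
    range_comp]
  let A : Plane →ᵃ[ℝ] Plane := ⟨fun z => s • z + t, s • LinearMap.id, fun z w => by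
    simp only [LinearMap.smul_apply, LinearMap.id_apply, vadd_eq_add]; module⟩
  exact (A.image_convexHull (range v)).symm

/-- If `T ≄ T'` are triangles, then `M_δ(T) ≅ M_δ(T')` for only finitely many `δ`. -/
theorem statement16 (T T' : Set Plane) (hT : IsTriangle T) (hT' : IsTriangle T')
    (h : ¬ TransCong T T') :
    {δ : ℝ | PlaneCongruent (shear δ '' T) (shear δ '' T')}.Finite := by
  obtain ⟨v, hv, rfl⟩ := hT.exists_affineIndependent_eq_convexHull
  obtain ⟨v', hv', rfl⟩ := hT'.exists_affineIndependent_eq_convexHull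
  refine (finite_iUnion fun σ => ?_).subset
    fun δ hδ => mem_iUnion.2 (hδ.exists_perm_norm_shear_eq hv hv')
  by_contra hinf
  exact h (transCong_convexHull_range_of_infinite hv σ hinf)
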